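/- arXiv:2210.12208 — 3 statements merged into one kernel-verified Lean document; each statement's English description precedes it below -/
import Mathlib

section
/- Let a and t be real numbers with 0 < a < t, and set x := (t - a)/2. Then ∫_a^t (1 + (t-s)^{-3/4}) * (s-a)^{-3/8} ds ≤ (13/5) * x^{5/8} + (28/5) * x^{-1/8}. -/
/-!
Split `(a, t)` at its midpoint `m`, so that `m - a = t - m = x`. On `(a, m)` the factor
`1 + (t - s)^(-3/4)` is at most its value `1 + x^(-3/4)` at `m`, and on `(m, t)` the factor
`(s - a)^(-3/8)` is at most `x^(-3/8)`; what remains are integrals of single powers,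
`∫_a^m (s - a)^(-3/8) = (8/5) x^(5/8)` and `∫_m^t (1 + (t - s)^(-3/4)) = x + 4 x^(1/4)`.
-/

open MeasureTheory intervalIntegral Real

section PowerKernels

variable {a b c r : ℝ}

theorem intervalIntegrable_sub_rpow (hr : -1 < r) :
    IntervalIntegrable (fun s => (s - c) ^ r) volume a b := by
  simpa using (intervalIntegrable_rpow' (a := a - c) (b := b - c) hr).comp_sub_right c

theorem intervalIntegrable_rpow_sub (hr : -1 < r) :
    IntervalIntegrable (fun s => (c - s) ^ r) volume a b := by
  simpa using (intervalIntegrable_rpow' (a := c - a) (b := c - b) hr).comp_sub_left c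

theorem integral_sub_rpow (hr : -1 < r) :
    ∫ s in a..b, (s - a) ^ r = (b - a) ^ (r + 1) / (r + 1) := by
  rw [integral_comp_sub_right (fun u => u ^ r) a, sub_self, integral_rpow (Or.inl hr),
    zero_rpow (by linarith), sub_zero]

theorem integral_rpow_sub (hr : -1 < r) :
    ∫ s in a..b, (b - s) ^ r = (b - a) ^ (r + 1) / (r + 1) := by
  rw [integral_comp_sub_left (fun u => u ^ r) b, sub_self, integral_rpow (Or.inl hr),
    zero_rpow (by linarith), sub_zero]

end PowerKernels

section MidpointSplitting

variable {a m t α β : ℝ}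

theorem intervalIntegrable_one_add_rpow_mul_rpow_left (hβ : -1 < β) (ham : a ≤ m) (hmt : m < t) :
    IntervalIntegrable (fun s => (1 + (t - s) ^ α) * (s - a) ^ β) volume a m := by
  refine (intervalIntegrable_sub_rpow hβ).continuousOn_mul
    (continuousOn_const.add (ContinuousOn.rpow_const (by fun_prop) fun s hs => Or.inl ?_))
  rw [Set.uIcc_of_le ham] at hs
  linarith [hs.2]

theorem intervalIntegrable_one_add_rpow_mul_rpow_right (hα : -1 < α) (ham : a < m) (hmt : m ≤ t) :
    IntervalIntegrable (fun s => (1 + (t - s) ^ α) * (s - a) ^ β) volume m t := by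
  refine (intervalIntegrable_const.add (intervalIntegrable_rpow_sub hα)).mul_continuousOn
    (ContinuousOn.rpow_const (by fun_prop) fun s hs => Or.inl ?_)
  rw [Set.uIcc_of_le hmt] at hs
  linarith [hs.1]

theorem integral_one_add_rpow_mul_rpow_le_left (hα : α ≤ 0) (hβ : -1 < β)
    (ham : a ≤ m) (hmt : m < t) :
    ∫ s in a..m, (1 + (t - s) ^ α) * (s - a) ^ β
      ≤ (1 + (t - m) ^ α) * ((m - a) ^ (β + 1) / (β + 1)) := by
  rw [← integral_sub_rpow hβ, ← intervalIntegral.integral_const_mul]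
  refine integral_mono_on ham (intervalIntegrable_one_add_rpow_mul_rpow_left hβ ham hmt)
    ((intervalIntegrable_sub_rpow hβ).const_mul _) fun s hs => ?_
  have hts : (t - s) ^ α ≤ (t - m) ^ α :=
    rpow_le_rpow_of_nonpos (by linarith) (by linarith [hs.2]) hα
  exact mul_le_mul_of_nonneg_right (by linarith) (rpow_nonneg (by linarith [hs.1]) _)

theorem integral_one_add_rpow_mul_rpow_le_right (hα : -1 < α) (hβ : β ≤ 0)
    (ham : a < m) (hmt : m ≤ t) :
    ∫ s in m..t, (1 + (t - s) ^ α) * (s - a) ^ β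
      ≤ ((t - m) + (t - m) ^ (α + 1) / (α + 1)) * (m - a) ^ β := by
  have hkernel : IntervalIntegrable (fun s => 1 + (t - s) ^ α) volume m t :=
    intervalIntegrable_const.add (intervalIntegrable_rpow_sub hα)
  have hone : ∫ _ in m..t, (1 : ℝ) = t - m := by simp
  rw [← integral_rpow_sub hα, ← hone,
    ← intervalIntegral.integral_add intervalIntegrable_const (intervalIntegrable_rpow_sub hα),
    ← intervalIntegral.integral_mul_const]
  refine integral_mono_on hmt (intervalIntegrable_one_add_rpow_mul_rpow_right hα ham hmt)
    (hkernel.mul_const _) fun s hs => ?_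
  have hsa : (s - a) ^ β ≤ (m - a) ^ β :=
    rpow_le_rpow_of_nonpos (by linarith) (by linarith [hs.1]) hβ
  exact mul_le_mul_of_nonneg_left hsa
    (add_nonneg zero_le_one (rpow_nonneg (by linarith [hs.2]) _))

end MidpointSplitting

theorem midpoint_splitting_integral_general (a t : ℝ) (hat : a < t) :
    ∫ s in Set.Ioo a t, (1 + (t - s) ^ (-(3 : ℝ) / 4)) * (s - a) ^ (-(3 : ℝ) / 8)
      ≤ (13 / 5) * ((t - a) / 2) ^ ((5 : ℝ) / 8)
        + (28 / 5) * ((t - a) / 2) ^ (-(1 : ℝ) / 8) := by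
  set x := (t - a) / 2
  set m := (a + t) / 2
  have hx : 0 < x := by simp only [x]; linarith
  have hma : m - a = x := by simp only [m, x]; ring
  have htm : t - m = x := by simp only [m, x]; ring
  have ham : a < m := by linarith
  have hmt : m < t := by linarith
  have hleft := integral_one_add_rpow_mul_rpow_le_left (α := -(3 : ℝ) / 4) (β := -(3 : ℝ) / 8)
    (by norm_num) (by norm_num) ham.le hmt
  have hright := integral_one_add_rpow_mul_rpow_le_right (α := -(3 : ℝ) / 4) (β := -(3 : ℝ) / 8)
    (by norm_num) (by norm_num) ham hmt.le
  rw [← integral_Ioc_eq_integral_Ioo, ← integral_of_le hat.le,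
    ← integral_add_adjacent_intervals
      (intervalIntegrable_one_add_rpow_mul_rpow_left (by norm_num) ham.le hmt)
      (intervalIntegrable_one_add_rpow_mul_rpow_right (by norm_num) ham hmt.le)]
  rw [hma, htm] at hleft hright
  have hpow (p q : ℝ) : x ^ p * x ^ q = x ^ (p + q) := (rpow_add hx p q).symm
  have hpow_one (q : ℝ) : x * x ^ q = x ^ (1 + q) := by rw [← hpow, rpow_one]
  calc _ ≤ (1 + x ^ (-(3 : ℝ) / 4)) * (x ^ (-(3 : ℝ) / 8 + 1) / (-(3 : ℝ) / 8 + 1))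
          + (x + x ^ (-(3 : ℝ) / 4 + 1) / (-(3 : ℝ) / 4 + 1)) * x ^ (-(3 : ℝ) / 8) :=
        add_le_add hleft hright
    _ = _ := by
        ring_nf
        rw [hpow, hpow, hpow_one]
        norm_num
        ring

/-- Midpoint-splitting integral estimate: for `0 < a < t` and `x := (t-a)/2`,
`∫_a^t (1 + (t-s)^(-3/4)) (s-a)^(-3/8) ds ≤ (13/5) x^(5/8) + (28/5) x^(-1/8)`. -/
theorem midpoint_splitting_integral (a t : ℝ) (ha : 0 < a) (hat : a < t) :
    ∫ s in Set.Ioo a t, (1 + (t - s) ^ (-(3 : ℝ) / 4)) * (s - a) ^ (-(3 : ℝ) / 8)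
      ≤ (13 / 5) * ((t - a) / 2) ^ ((5 : ℝ) / 8)
        + (28 / 5) * ((t - a) / 2) ^ (-(1 : ℝ) / 8) :=
  midpoint_splitting_integral_general a t hat
end

section
/- Let t₀ and t₁ be real numbers with 0 < t₀ < t₁, and let t ∈ (t₀/2, t₁). Then (t - t₀/2)^{1/2} * ∫_{t₀/2}^t (1 + (t-s)^{-3/4}) * (s - t₀/2)^{-3/8} ds ≤ √2 * ( (13/5) * (t₁/2 - t₀/4)^{9/8} + (28/5) * (t₁/2 - t₀/4)^{3/8} ). -/
/-!
Write `a = t₀/2` and split `∫_a^t` at the midpoint `m = a + x`, `x = (t - a)/2`. On `[a, m]` the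
factor `(t - s)^(-3/4)` is at most `x^(-3/4)`, on `[m, t]` the factor `(s - a)^(-3/8)` is at most
`x^(-3/8)`, and what remains are explicit integrals of single powers; together they give
`(13/5) x^(5/8) + (28/5) x^(-1/8)`. Finally `(t - a)^(1/2) = √2 x^(1/2)` and `x ≤ t₁/2 - t₀/4`.
-/

open MeasureTheory intervalIntegral Set

theorem integral_sub_left_rpow {a b r : ℝ} (hr : -1 < r) :
    ∫ s in a..b, (s - a) ^ r = (b - a) ^ (r + 1) / (r + 1) := by
  rw [integral_comp_sub_right (· ^ r), integral_rpow (Or.inl hr), sub_self,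
    Real.zero_rpow (by linarith), sub_zero]

theorem integral_sub_right_rpow {a b r : ℝ} (hr : -1 < r) :
    ∫ s in a..b, (b - s) ^ r = (b - a) ^ (r + 1) / (r + 1) := by
  rw [integral_comp_sub_left (· ^ r), integral_rpow (Or.inl hr), sub_self,
    Real.zero_rpow (by linarith), sub_zero]

theorem intervalIntegrable_sub_left_rpow {a b r : ℝ} (hr : -1 < r) :
    IntervalIntegrable (fun s => (s - a) ^ r) volume a b := by
  simpa using (intervalIntegrable_rpow' (a := 0) (b := b - a) hr).comp_sub_right a

theorem intervalIntegrable_sub_right_rpow {a b r : ℝ} (hr : -1 < r) :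
    IntervalIntegrable (fun s => (b - s) ^ r) volume a b := by
  simpa using ((intervalIntegrable_rpow' (a := 0) (b := b - a) hr).comp_sub_left b).symm

theorem IntervalIntegrable.of_nonneg_of_le_on {f g : ℝ → ℝ} {a b : ℝ} (hab : a ≤ b)
    (hf : Measurable f) (hg : IntervalIntegrable g volume a b)
    (hf₀ : ∀ s ∈ Icc a b, 0 ≤ f s) (hfg : ∀ s ∈ Icc a b, f s ≤ g s) :
    IntervalIntegrable f volume a b := by
  refine hg.mono_fun' hf.aestronglyMeasurable ?_
  rw [uIoc_of_le hab]
  filter_upwards [ae_restrict_mem measurableSet_Ioc] with s hs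
  rw [Real.norm_of_nonneg (hf₀ s (Ioc_subset_Icc_self hs))]
  exact hfg s (Ioc_subset_Icc_self hs)

section SingularKernel

variable {a m t α β s : ℝ}

theorem singular_kernel_nonneg (has : a ≤ s) (hst : s ≤ t) :
    0 ≤ (1 + (t - s) ^ (-α)) * (s - a) ^ (-β) := by
  have := Real.rpow_nonneg (sub_nonneg.2 hst) (-α)
  exact mul_nonneg (by linarith) (Real.rpow_nonneg (sub_nonneg.2 has) _)

theorem singular_kernel_le_left (hα : 0 ≤ α) (hmt : m < t) (hs : s ∈ Icc a m) :
    (1 + (t - s) ^ (-α)) * (s - a) ^ (-β) ≤ (1 + (t - m) ^ (-α)) * (s - a) ^ (-β) := by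
  have hpow : (t - s) ^ (-α) ≤ (t - m) ^ (-α) :=
    Real.rpow_le_rpow_of_nonpos (by linarith) (by linarith [hs.2]) (by linarith)
  exact mul_le_mul_of_nonneg_right (by linarith) (Real.rpow_nonneg (by linarith [hs.1]) _)

theorem singular_kernel_le_right (hβ : 0 ≤ β) (ham : a < m) (hs : s ∈ Icc m t) :
    (1 + (t - s) ^ (-α)) * (s - a) ^ (-β) ≤ (m - a) ^ (-β) * (1 + (t - s) ^ (-α)) := by
  rw [mul_comm ((m - a) ^ (-β))]
  have hpow : (s - a) ^ (-β) ≤ (m - a) ^ (-β) :=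
    Real.rpow_le_rpow_of_nonpos (by linarith) (by linarith [hs.1]) (by linarith)
  have := Real.rpow_nonneg (sub_nonneg.2 hs.2) (-α)
  exact mul_le_mul_of_nonneg_left hpow (by linarith)

theorem integral_singular_kernel_le (hat : a < t) (hα₀ : 0 ≤ α) (hα₁ : α < 1)
    (hβ₀ : 0 ≤ β) (hβ₁ : β < 1) :
    ∫ s in a..t, (1 + (t - s) ^ (-α)) * (s - a) ^ (-β)
      ≤ (1 / (1 - β) + 1) * ((t - a) / 2) ^ (1 - β)
        + (1 / (1 - β) + 1 / (1 - α)) * ((t - a) / 2) ^ (1 - α - β) := by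
  set x := (t - a) / 2
  have hx : 0 < x := by positivity
  set m := a + x
  have hma : m - a = x := by ring
  have htm : t - m = x := by ring
  have ham : a < m := by linarith
  have hmt : m < t := by linarith
  have hα : -1 < -α := by linarith
  have hβ : -1 < -β := by linarith
  have hpow := intervalIntegrable_sub_right_rpow (a := m) (b := t) hα
  have hgL := (intervalIntegrable_sub_left_rpow (a := a) (b := m) hβ).const_mul
    (1 + (t - m) ^ (-α))
  have hgR := ((intervalIntegrable_const (c := (1 : ℝ))).add hpow).const_mul ((m - a) ^ (-β))
  have hKL := IntervalIntegrable.of_nonneg_of_le_on ham.le (by fun_prop) hgL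
    (fun s hs => singular_kernel_nonneg hs.1 (by linarith [hs.2]))
    (fun s => singular_kernel_le_left hα₀ hmt)
  have hKR := IntervalIntegrable.of_nonneg_of_le_on hmt.le (by fun_prop) hgR
    (fun s hs => singular_kernel_nonneg (by linarith [hs.1]) hs.2)
    (fun s => singular_kernel_le_right hβ₀ ham)
  calc ∫ s in a..t, (1 + (t - s) ^ (-α)) * (s - a) ^ (-β)
      = (∫ s in a..m, (1 + (t - s) ^ (-α)) * (s - a) ^ (-β))
        + ∫ s in m..t, (1 + (t - s) ^ (-α)) * (s - a) ^ (-β) :=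
        (integral_add_adjacent_intervals hKL hKR).symm
    _ ≤ (∫ s in a..m, (1 + (t - m) ^ (-α)) * (s - a) ^ (-β))
        + ∫ s in m..t, (m - a) ^ (-β) * (1 + (t - s) ^ (-α)) :=
        add_le_add (integral_mono_on ham.le hKL hgL fun s => singular_kernel_le_left hα₀ hmt)
          (integral_mono_on hmt.le hKR hgR fun s => singular_kernel_le_right hβ₀ ham)
    _ = (1 + x ^ (-α)) * (x ^ (1 - β) / (1 - β)) + x ^ (-β) * (x + x ^ (1 - α) / (1 - α)) := by
        rw [intervalIntegral.integral_const_mul, intervalIntegral.integral_const_mul,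
          integral_sub_left_rpow hβ, integral_add intervalIntegrable_const hpow,
          intervalIntegral.integral_const, integral_sub_right_rpow hα, smul_eq_mul, mul_one,
          hma, htm, neg_add_eq_sub, neg_add_eq_sub]
    _ = _ := by
        have h₁ : x ^ (-α) * x ^ (1 - β) = x ^ (1 - α - β) := by
          rw [← Real.rpow_add hx]; ring_nf
        have h₂ : x ^ (-β) * x = x ^ (1 - β) := by
          rw [← Real.rpow_add_one hx.ne']; ring_nf
        have h₃ : x ^ (-β) * x ^ (1 - α) = x ^ (1 - α - β) := by
          rw [← Real.rpow_add hx]; ring_nf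
        linear_combination (1 / (1 - β)) * h₁ + h₂ + (1 / (1 - α)) * h₃

end SingularKernel

theorem uniform_weighted_integral_bound_general (t₀ t₁ : ℝ)
    (t : ℝ) (htmem : t ∈ Set.Ioo (t₀ / 2) t₁) :
    (t - t₀ / 2) ^ ((1 : ℝ) / 2) *
        ∫ s in Set.Ioo (t₀ / 2) t,
          (1 + (t - s) ^ (-(3 : ℝ) / 4)) * (s - t₀ / 2) ^ (-(3 : ℝ) / 8)
      ≤ Real.sqrt 2 * ((13 / 5) * (t₁ / 2 - t₀ / 4) ^ ((9 : ℝ) / 8)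
          + (28 / 5) * (t₁ / 2 - t₀ / 4) ^ ((3 : ℝ) / 8)) := by
  obtain ⟨hat, ht₁⟩ := htmem
  set x := (t - t₀ / 2) / 2
  have hx : 0 < x := by positivity
  have hxX : x ≤ t₁ / 2 - t₀ / 4 := by linarith [show x = t / 2 - t₀ / 4 by ring]
  have hI := integral_singular_kernel_le (α := 3 / 4) (β := 3 / 8) hat
    (by norm_num) (by norm_num) (by norm_num) (by norm_num)
  rw [intervalIntegral.integral_of_le hat.le, integral_Ioc_eq_integral_Ioo] at hI
  norm_num [neg_div] at hI ⊢
  have hsqrt : (t - t₀ / 2) ^ ((1 : ℝ) / 2) = √2 * x ^ ((1 : ℝ) / 2) := by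
    rw [show t - t₀ / 2 = 2 * x by ring, Real.mul_rpow zero_le_two hx.le, Real.sqrt_eq_rpow]
  calc (t - t₀ / 2) ^ ((1 : ℝ) / 2) *
        ∫ s in Set.Ioo (t₀ / 2) t, (1 + (t - s) ^ (-(3 / 4) : ℝ)) * (s - t₀ / 2) ^ (-(3 / 8) : ℝ)
      ≤ √2 * x ^ ((1 : ℝ) / 2) * (13 / 5 * x ^ ((5 : ℝ) / 8) + 28 / 5 * x ^ (-(1 / 8) : ℝ)) := by
        rw [← hsqrt]; gcongr
    _ = √2 * (13 / 5 * x ^ ((9 : ℝ) / 8) + 28 / 5 * x ^ ((3 : ℝ) / 8)) := by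
        have h₁ : x ^ ((1 : ℝ) / 2) * x ^ ((5 : ℝ) / 8) = x ^ ((9 : ℝ) / 8) := by
          rw [← Real.rpow_add hx]; norm_num
        have h₂ : x ^ ((1 : ℝ) / 2) * x ^ (-(1 / 8) : ℝ) = x ^ ((3 : ℝ) / 8) := by
          rw [← Real.rpow_add hx]; norm_num
        linear_combination √2 * (13 / 5 * h₁ + 28 / 5 * h₂)
    _ ≤ _ := by gcongr

/-- Uniform weighted integral bound: for `0 < t₀ < t₁` and `t ∈ (t₀/2, t₁)`,
`(t - t₀/2)^(1/2) ∫_{t₀/2}^t (1 + (t-s)^(-3/4)) (s - t₀/2)^(-3/8) ds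
  ≤ √2 ((13/5)(t₁/2 - t₀/4)^(9/8) + (28/5)(t₁/2 - t₀/4)^(3/8))`. -/
theorem uniform_weighted_integral_bound (t₀ t₁ : ℝ) (ht₀ : 0 < t₀) (ht : t₀ < t₁)
    (t : ℝ) (htmem : t ∈ Set.Ioo (t₀ / 2) t₁) :
    (t - t₀ / 2) ^ ((1 : ℝ) / 2) *
        ∫ s in Set.Ioo (t₀ / 2) t,
          (1 + (t - s) ^ (-(3 : ℝ) / 4)) * (s - t₀ / 2) ^ (-(3 : ℝ) / 8)
      ≤ Real.sqrt 2 * ((13 / 5) * (t₁ / 2 - t₀ / 4) ^ ((9 : ℝ) / 8)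
          + (28 / 5) * (t₁ / 2 - t₀ / 4) ^ ((3 : ℝ) / 8)) :=
  uniform_weighted_integral_bound_general t₀ t₁ t htmem
end

section
/- Let a > 0, b > 0, θ > 0 and T > 0 be real numbers. Then there exists a constant C > 0, depending only on a, b, θ and T, such that every differentiable function y : (0,T) → ℝ with y(t) ≥ 0 for all t ∈ (0,T) and y'(t) ≤ -a * y(t)^{1+θ} + b for all t ∈ (0,T) satisfies y(t) ≤ C * t^{-1/θ} for all t ∈ (0,T). In particular, C does not depend on y (and hence not on any initial value of y). -/
/-!
Compare `y` with the shifted barrier `z(t) = K (t - s)^(-1/θ)`, which blows up at `t = s`.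
For `K` large (`a θ K^θ ≥ 2` and `a K^(1+θ) ≥ 2 b T^(1+1/θ)`) it is a strict supersolution,
`z' > -a z^(1+θ) + b` on `(s, s + T)`, so `y` can never cross it from below; since `z = +∞`
at `s`, `y ≤ z` whatever `y(s)` is. Taking `s = t/2` gives `y(t) ≤ 2^(1/θ) K t^(-1/θ)`.
-/

open Set Real Filter Topology

lemma tendsto_sub_const_nhdsGT_zero (s : ℝ) : Tendsto (fun x => x - s) (𝓝[>] s) (𝓝[>] 0) :=
  tendsto_nhdsWithin_iff.2
    ⟨by simpa using ((continuous_sub_right s).tendsto s).mono_left nhdsWithin_le_nhds,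
      eventually_mem_nhdsWithin.mono fun _ (hx : s < _) => sub_pos.2 hx⟩

lemma exists_barrier_constant {a θ : ℝ} (ha : 0 < a) (hθ : 0 < θ) (b T : ℝ) :
    ∃ K, 0 < K ∧ 2 ≤ a * θ * K ^ θ ∧ 2 * b * T ^ (1 / θ + 1) ≤ a * K ^ (1 + θ) :=
  (((tendsto_rpow_atTop hθ).const_mul_atTop (mul_pos ha hθ)).eventually_ge_atTop 2 |>.and
    (((tendsto_rpow_atTop (by positivity : 0 < 1 + θ)).const_mul_atTop ha).eventually_ge_atTop
      _) |>.and (eventually_gt_atTop 0)).exists.imp fun _ ⟨⟨h₁, h₂⟩, h₀⟩ => ⟨h₀, h₁, h₂⟩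

section
variable {a b θ K T : ℝ}

lemma barrier_rhs_lt_deriv (ha : 0 < a) (hθ : 0 < θ) (hK : 0 < K) (hKθ : 2 ≤ a * θ * K ^ θ)
    (hKT : 2 * b * T ^ (1 / θ + 1) ≤ a * K ^ (1 + θ)) {τ : ℝ} (hτ : 0 < τ) (hτT : τ < T) :
    -a * (K * τ ^ (-1 / θ)) ^ (1 + θ) + b < K * (-1 / θ * τ ^ (-1 / θ - 1)) := by
  have hT : 0 < T := hτ.trans hτT
  have hKpow : K ^ (1 + θ) = K * K ^ θ := by rw [rpow_add hK, rpow_one]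
  have hpow : (K * τ ^ (-1 / θ)) ^ (1 + θ) = K * K ^ θ * τ ^ (-1 / θ - 1) := by
    rw [mul_rpow hK.le (by positivity), ← rpow_mul hτ.le, hKpow]
    congr 2; field_simp; ring
  have hexp : -1 / θ - 1 < 0 := by rw [neg_div]; linarith [one_div_pos.2 hθ]
  have hTT : T ^ (1 / θ + 1) * T ^ (-1 / θ - 1) = 1 := by
    rw [← rpow_add hT, show 1 / θ + 1 + (-1 / θ - 1) = 0 by ring, rpow_zero]
  have hbτ : 2 * b < a * (K * K ^ θ) * τ ^ (-1 / θ - 1) := calc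
    2 * b = 2 * b * T ^ (1 / θ + 1) * T ^ (-1 / θ - 1) := by
      rw [mul_assoc _ (T ^ _), hTT, mul_one]
    _ ≤ a * (K * K ^ θ) * T ^ (-1 / θ - 1) := by rw [← hKpow]; gcongr
    _ < a * (K * K ^ θ) * τ ^ (-1 / θ - 1) :=
      mul_lt_mul_of_pos_left (rpow_lt_rpow_of_neg hτ hτT hexp) (by positivity)
  have hθK : 1 / θ ≤ a * K ^ θ / 2 := by rw [div_le_iff₀ hθ]; linarith
  have hθKτ := mul_le_mul_of_nonneg_left hθK (by positivity : 0 ≤ K * τ ^ (-1 / θ - 1))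
  rw [hpow, show K * (-1 / θ * τ ^ (-1 / θ - 1)) = -(K * τ ^ (-1 / θ - 1) * (1 / θ)) by ring]
  linarith

lemma le_barrier_of_deriv_le (ha : 0 < a) (hθ : 0 < θ) (hK : 0 < K) (hKθ : 2 ≤ a * θ * K ^ θ)
    (hKT : 2 * b * T ^ (1 / θ + 1) ≤ a * K ^ (1 + θ)) {y : ℝ → ℝ} {s t : ℝ} (hst : s < t)
    (htT : t - s < T) (hy : ∀ x ∈ Icc s t, DifferentiableAt ℝ y x)
    (hode : ∀ x ∈ Icc s t, deriv y x ≤ -a * y x ^ (1 + θ) + b) :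
    y t ≤ K * (t - s) ^ (-1 / θ) := by
  set z : ℝ → ℝ := fun x => K * (x - s) ^ (-1 / θ)
  have hz : ∀ x, s < x → HasDerivAt z (K * (-1 / θ * (x - s) ^ (-1 / θ - 1))) x := fun x hx => by
    simpa using (((hasDerivAt_id x).sub_const s).rpow_const (Or.inl (sub_pos.2 hx).ne')).const_mul K
  have hblow : Tendsto z (𝓝[>] s) atTop :=
    ((tendsto_rpow_neg_nhdsGT_zero (div_neg_of_neg_of_pos neg_one_lt_zero hθ)).comp
      (tendsto_sub_const_nhdsGT_zero s)).const_mul_atTop hK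
  have hys : ∀ᶠ x in 𝓝[>] s, y x < y s + 1 :=
    nhdsWithin_le_nhds <|
      (hy s ⟨le_rfl, hst.le⟩).continuousAt.eventually (gt_mem_nhds (lt_add_one _))
  obtain ⟨r, hyr, hzr, hsr, hrt⟩ :=
    (hys.and ((hblow.eventually_ge_atTop (y s + 1)).and (Ioo_mem_nhdsGT hst))).exists
  have hIcc : Icc r t ⊆ Icc s t := Icc_subset_Icc_left hsr.le
  refine image_le_of_deriv_right_lt_deriv_boundary'
    (fun x hx => (hy x (hIcc hx)).continuousAt.continuousWithinAt)
    (fun x hx => (hy x (hIcc (Ico_subset_Icc_self hx))).hasDerivAt.hasDerivWithinAt)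
    (hyr.le.trans hzr)
    (fun x hx => (hz x (hsr.trans_le hx.1)).continuousAt.continuousWithinAt)
    (fun x hx => (hz x (hsr.trans_le hx.1)).hasDerivWithinAt)
    (fun x hx hyx => ?_) ⟨hrt.le, le_rfl⟩
  refine (hode x (hIcc (Ico_subset_Icc_self hx))).trans_lt ?_
  rw [hyx]
  exact barrier_rhs_lt_deriv ha hθ hK hKθ hKT (sub_pos.2 (hsr.trans_le hx.1)) (by linarith [hx.2])
end

theorem superlinear_ode_decay_general (a b θ T : ℝ) (ha : 0 < a) (hθ : 0 < θ) :
    ∃ C : ℝ, 0 < C ∧ ∀ y : ℝ → ℝ,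
      (∀ t ∈ Set.Ioo (0 : ℝ) T, DifferentiableAt ℝ y t) →
      (∀ t ∈ Set.Ioo (0 : ℝ) T, 0 ≤ y t) →
      (∀ t ∈ Set.Ioo (0 : ℝ) T, deriv y t ≤ -a * y t ^ (1 + θ) + b) →
      ∀ t ∈ Set.Ioo (0 : ℝ) T, y t ≤ C * t ^ (-1 / θ) := by
  obtain ⟨K, hK, hKθ, hKT⟩ := exists_barrier_constant ha hθ b T
  refine ⟨K / 2 ^ (-1 / θ), by positivity, fun y hdiff _ hode t ⟨ht₀, htT⟩ => ?_⟩
  have hsub : Icc (t / 2) t ⊆ Ioo 0 T := fun x hx => ⟨by linarith [hx.1], hx.2.trans_lt htT⟩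
  calc y t ≤ K * (t - t / 2) ^ (-1 / θ) :=
        le_barrier_of_deriv_le ha hθ hK hKθ hKT (by linarith) (by linarith)
          (fun x hx => hdiff x (hsub hx)) (fun x hx => hode x (hsub hx))
    _ = K / 2 ^ (-1 / θ) * t ^ (-1 / θ) := by
        rw [sub_half, div_rpow ht₀.le zero_le_two]; ring

/-- Initial-data-independent decay for ODEs with superlinear absorption:
for `a, b, θ, T > 0` there is `C > 0`, independent of `y`, such that every
differentiable nonnegative `y` on `(0,T)` with `y' ≤ -a y^(1+θ) + b` on `(0,T)`
satisfies `y t ≤ C t^(-1/θ)` on `(0,T)`. -/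
theorem superlinear_ode_decay (a b θ T : ℝ) (ha : 0 < a) (hb : 0 < b)
    (hθ : 0 < θ) (hT : 0 < T) :
    ∃ C : ℝ, 0 < C ∧ ∀ y : ℝ → ℝ,
      (∀ t ∈ Set.Ioo (0 : ℝ) T, DifferentiableAt ℝ y t) →
      (∀ t ∈ Set.Ioo (0 : ℝ) T, 0 ≤ y t) →
      (∀ t ∈ Set.Ioo (0 : ℝ) T, deriv y t ≤ -a * y t ^ (1 + θ) + b) →
      ∀ t ∈ Set.Ioo (0 : ℝ) T, y t ≤ C * t ^ (-1 / θ) :=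
  superlinear_ode_decay_general a b θ T ha hθ
end
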